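/- arXiv:2603.23434 — 2 statements merged into one kernel-verified Lean document; each statement's English description precedes it below -/
import Mathlib

section
/- Let G be a finite connected cubic graph and let (I1,I2) be a pair of disjoint independent sets satisfying Conditions (I) and (II). If three red vertices u, v, w are all adjacent in G to one common vertex x ∈ I1 ∪ I2, then every vertex y ∉ {u,v,w} with min(d(y,u), d(y,v), d(y,w)) ≤ 2 belongs to I1 ∪ I2; moreover {u,v,w} is the vertex set of a connected component of H in which u, v, w are pairwise adjacent (a triangle component of H). -/
open SimpleGraph

variable {V : Type*}

/-- A finset `I` is an independent set of `G`. -/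
def FinsetIndep (G : SimpleGraph V) (I : Finset V) : Prop :=
  ∀ u ∈ I, ∀ v ∈ I, ¬ G.Adj u v

/-- Condition (I): `|I1| + |I2|` is maximum among all pairs of disjoint
independent sets of `G`. -/
def CondI (G : SimpleGraph V) (I1 I2 : Finset V) : Prop :=
  ∀ J1 J2 : Finset V, Disjoint J1 J2 → FinsetIndep G J1 → FinsetIndep G J2 →
    J1.card + J2.card ≤ I1.card + I2.card

/-- The set of red vertices: the vertices outside `I1 ∪ I2`. -/
def redSet (I1 I2 : Finset V) : Set V := {v | v ∉ I1 ∧ v ∉ I2}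

/-- The number of connected components of the subgraph of `G` induced on the
red vertices. -/
noncomputable def numRedComp (G : SimpleGraph V) (I1 I2 : Finset V) : ℕ :=
  Nat.card ((G.induce (redSet I1 I2)).ConnectedComponent)

/-- Condition (II): subject to Condition (I), the number of connected
components of the subgraph induced on the red vertices is minimum. -/
def CondII (G : SimpleGraph V) (I1 I2 : Finset V) : Prop :=
  ∀ J1 J2 : Finset V, Disjoint J1 J2 → FinsetIndep G J1 → FinsetIndep G J2 →
    CondI G J1 J2 → numRedComp G I1 I2 ≤ numRedComp G J1 J2

/-- The auxiliary graph `H` on the red vertices: two distinct red vertices are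
adjacent iff their distance in `G` is at most 2. -/
def Hgraph (G : SimpleGraph V) (I1 I2 : Finset V) : SimpleGraph (redSet I1 I2) where
  Adj x y := x ≠ y ∧ G.edist (x : V) (y : V) ≤ 2
  symm := ⟨by
    rintro x y ⟨hne, hd⟩
    exact ⟨hne.symm, by rwa [SimpleGraph.edist_comm]⟩⟩
  loopless := ⟨by rintro x ⟨hne, -⟩; exact hne rfl⟩

/-!
Assume `x ∈ I1`. All neighbours of `x` are red, so `x` can be moved to `I2` without changing the
red set; as every red vertex of a maximum pair has neighbours on both sides, degree 3 then forbids
`u` from having a red neighbour. A red `y` at distance two from `u` through a black `m ≠ x` would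
allow exchanging `u` with `m` or with `x` (possibly after moving `x`): the new pair is still
maximum, but its red set loses the isolated red vertex `u` and gains a vertex adjacent to a red
vertex, so it has fewer red components, against Condition (II).
-/

namespace SimpleGraph

variable {G : SimpleGraph V}

lemma ConnectedComponent.supp_connectedComponentMk_subset {S : Set V} {c : V} (hc : c ∈ S)
    (hS : ∀ a b, G.Adj a b → a ∈ S → b ∈ S) : (G.connectedComponentMk c).supp ⊆ S := by
  intro z hz
  have hcz : Relation.ReflTransGen G.Adj c z :=
    (reachable_iff_reflTransGen c z).mp (ConnectedComponent.exact hz).symm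
  clear hz
  induction hcz with
  | refl => exact hc
  | tail _ hab ih => exact hS _ _ hab ih

lemma reachable_induce_diff_singleton {T : Set V} {t : V} (ht : ∀ s ∈ T, ¬ G.Adj t s)
    {a b : T} (p : (G.induce T).Walk a b) (ha : (a : V) ≠ t) (hb : (b : V) ≠ t) :
    (G.induce (T \ {t})).Reachable ⟨a, a.2, ha⟩ ⟨b, b.2, hb⟩ := by
  induction p with
  | nil => rfl
  | @cons a c b hac p ih =>
    have hc : (c : V) ≠ t := by
      intro hct
      exact ht a a.2 (hct ▸ hac.symm)
    have hac' : (G.induce (T \ {t})).Adj ⟨a, a.2, ha⟩ ⟨c, c.2, hc⟩ := hac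
    exact hac'.reachable.trans (ih hc hb)

lemma card_connectedComponent_induce_diff_singleton_lt [Finite V] {T : Set V} {t : V}
    (htT : t ∈ T) (ht : ∀ s ∈ T, ¬ G.Adj t s) :
    Nat.card (G.induce (T \ {t})).ConnectedComponent <
      Nat.card (G.induce T).ConnectedComponent := by
  let f := ConnectedComponent.map (G.induceHomOfLE (s := T \ {t}) (s' := T) Set.sdiff_subset).toHom
  have hf : f.Injective := by
    intro C D
    refine C.ind fun a => D.ind fun b hab => ?_
    obtain ⟨p⟩ := ConnectedComponent.exact hab
    exact ConnectedComponent.sound (reachable_induce_diff_singleton ht p a.2.2 b.2.2)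
  have hmiss : ∀ C, f C ≠ (G.induce T).connectedComponentMk ⟨t, htT⟩ := by
    intro C
    refine C.ind fun a hat => ?_
    obtain ⟨p⟩ := ConnectedComponent.exact hat.symm
    have hne : (⟨t, htT⟩ : T) ≠ ⟨a, a.2.1⟩ := fun h => a.2.2 (congrArg Subtype.val h).symm
    obtain ⟨c, htc, -, -⟩ := p.exists_eq_cons_of_ne hne
    exact ht c c.2 htc
  have := Fintype.ofFinite (G.induce T).ConnectedComponent
  have := Fintype.ofFinite (G.induce (T \ {t})).ConnectedComponent
  simpa only [Nat.card_eq_fintype_card] using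
    Fintype.card_lt_of_injective_of_notMem f hf (Set.mem_range.not.mpr (by simpa using hmiss))

lemma card_connectedComponent_induce_insert_le [Finite V] {S : Set V} {z : V}
    (hz : ∃ s ∈ S, G.Adj z s) :
    Nat.card (G.induce (insert z S)).ConnectedComponent ≤
      Nat.card (G.induce S).ConnectedComponent := by
  refine Nat.card_le_card_of_surjective
    (ConnectedComponent.map (G.induceHomOfLE (Set.subset_insert z S)).toHom) fun C => ?_
  refine C.ind fun b => ?_
  by_cases hb : (b : V) ∈ S
  · exact ⟨(G.induce S).connectedComponentMk ⟨b, hb⟩, rfl⟩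
  · obtain ⟨s, hs, hzs⟩ := hz
    have hbz : (b : V) = z := (Set.mem_insert_iff.mp b.2).resolve_right hb
    refine ⟨(G.induce S).connectedComponentMk ⟨s, hs⟩, ?_⟩
    exact ConnectedComponent.connectedComponentMk_eq_of_adj
      (show G.Adj s b by rw [hbz]; exact hzs.symm)

lemma edist_le_two_of_adj_of_adj {x a b : V} (ha : G.Adj x a) (hb : G.Adj x b) :
    G.edist a b ≤ 2 :=
  (Walk.cons ha.symm hb.toWalk).edist_le

lemma exists_adj_adj_of_edist_le_two {y u : V} (h : G.edist y u ≤ 2) (hne : y ≠ u)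
    (hnadj : ¬ G.Adj y u) : ∃ m, G.Adj y m ∧ G.Adj m u := by
  by_contra! hm
  refine (two_lt_edist_iff.mpr ⟨hne, hnadj, ?_⟩).not_ge h
  ext m
  simpa [mem_commonNeighbors, adj_comm] using hm m

lemma eq_or_eq_or_eq_of_adj {u a b c t : V} [Fintype (G.neighborSet u)] (hdeg : G.degree u ≤ 3)
    (ha : G.Adj u a) (hb : G.Adj u b) (hc : G.Adj u c) (hab : a ≠ b) (hac : a ≠ c) (hbc : b ≠ c)
    (ht : G.Adj u t) : t = a ∨ t = b ∨ t = c := by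
  classical
  by_contra! htabc
  have hsub : ({t, a, b, c} : Finset V) ⊆ G.neighborFinset u := by
    simp [Finset.insert_subset_iff, *]
  have hcard : ({t, a, b, c} : Finset V).card = 4 := by
    rw [Finset.card_insert_of_notMem (by simp [htabc]),
      Finset.card_insert_of_notMem (by simp [hab, hac]), Finset.card_pair hbc]
  have := Finset.card_le_card hsub
  rw [card_neighborFinset_eq_degree] at this
  omega

end SimpleGraph

section Pairs

variable {G : SimpleGraph V} {A B : Finset V}

lemma FinsetIndep.mono {I J : Finset V} (hI : FinsetIndep G I) (hJI : J ⊆ I) :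
    FinsetIndep G J :=
  fun a ha b hb => hI a (hJI ha) b (hJI hb)

lemma FinsetIndep.insert [DecidableEq V] {I : Finset V} {a : V} (hI : FinsetIndep G I)
    (ha : ∀ t ∈ I, ¬ G.Adj a t) : FinsetIndep G (insert a I) := by
  intro p hp q hq
  rcases Finset.mem_insert.mp hp with rfl | hpI <;> rcases Finset.mem_insert.mp hq with rfl | hqI
  · exact G.loopless.irrefl _
  · exact ha q hqI
  · exact fun hpq => ha p hpI hpq.symm
  · exact hI p hpI q hqI

lemma redSet_comm (A B : Finset V) : redSet A B = redSet B A := by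
  ext t
  exact and_comm

lemma redSet_erase_insert [DecidableEq V] {x : V} (hxA : x ∈ A) :
    redSet (A.erase x) (insert x B) = redSet A B := by
  ext t
  simp only [redSet, Set.mem_ofPred_eq, Finset.mem_erase, Finset.mem_insert]
  by_cases h : t = x <;> simp_all

lemma redSet_insert_erase [DecidableEq V] {u z : V} (hu : u ∈ redSet A B) (hzA : z ∈ A)
    (hzB : z ∉ B) : redSet (insert u (A.erase z)) B = insert z (redSet A B \ {u}) := by
  have huz : u ≠ z := fun h => hu.1 (h ▸ hzA)
  ext t
  simp only [redSet, Set.mem_insert_iff, Set.mem_sdiff, Set.mem_ofPred_eq, Set.mem_singleton_iff,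
    Finset.mem_insert, Finset.mem_erase]
  by_cases h1 : t = u <;> by_cases h2 : t = z <;> simp_all

lemma numRedComp_congr {A' B' : Finset V} (h : redSet A' B' = redSet A B) :
    numRedComp G A' B' = numRedComp G A B := by
  rw [numRedComp, numRedComp, h]

lemma CondI.symm (h : CondI G A B) : CondI G B A :=
  fun J1 J2 hJ hJ1 hJ2 => (add_comm B.card A.card).symm ▸ h J1 J2 hJ hJ1 hJ2

lemma CondI.of_card_eq {A' B' : Finset V} (h : CondI G A B)
    (hcard : A'.card + B'.card = A.card + B.card) : CondI G A' B' :=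
  fun J1 J2 hJ hJ1 hJ2 => hcard ▸ h J1 J2 hJ hJ1 hJ2

lemma CondII.of_redSet_eq {A' B' : Finset V} (h : CondII G A B)
    (hred : redSet A' B' = redSet A B) : CondII G A' B' :=
  fun J1 J2 hJ hJ1 hJ2 hJI => numRedComp_congr hred ▸ h J1 J2 hJ hJ1 hJ2 hJI

lemma CondII.symm (h : CondII G A B) : CondII G B A :=
  h.of_redSet_eq (redSet_comm B A)

structure IsMaximumPair (G : SimpleGraph V) (A B : Finset V) : Prop where
  disjoint : Disjoint A B
  indep_left : FinsetIndep G A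
  indep_right : FinsetIndep G B
  condI : CondI G A B

structure IsOptimalPair (G : SimpleGraph V) (A B : Finset V) : Prop
    extends IsMaximumPair G A B where
  condII : CondII G A B

lemma IsMaximumPair.symm (h : IsMaximumPair G A B) : IsMaximumPair G B A :=
  ⟨h.disjoint.symm, h.indep_right, h.indep_left, h.condI.symm⟩

lemma IsOptimalPair.symm (h : IsOptimalPair G A B) : IsOptimalPair G B A :=
  ⟨h.toIsMaximumPair.symm, h.condII.symm⟩

lemma IsMaximumPair.exists_adj_mem_right (h : IsMaximumPair G A B) {r : V}
    (hr : r ∈ redSet A B) : ∃ s ∈ B, G.Adj r s := by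
  classical
  by_contra! hno
  have hle := h.condI A (insert r B) (Finset.disjoint_insert_right.mpr ⟨hr.1, h.disjoint⟩)
    h.indep_left (h.indep_right.insert hno)
  rw [Finset.card_insert_of_notMem hr.2] at hle
  omega

lemma IsMaximumPair.exists_adj_mem_left (h : IsMaximumPair G A B) {r : V}
    (hr : r ∈ redSet A B) : ∃ s ∈ A, G.Adj r s :=
  h.symm.exists_adj_mem_right ⟨hr.2, hr.1⟩

lemma IsMaximumPair.erase_insert [DecidableEq V] (h : IsMaximumPair G A B) {x : V}
    (hxA : x ∈ A) (hxB : ∀ t ∈ B, ¬ G.Adj x t) :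
    IsMaximumPair G (A.erase x) (insert x B) := by
  have hx : x ∉ B := Finset.disjoint_left.mp h.disjoint hxA
  refine ⟨?_, h.indep_left.mono (Finset.erase_subset x A), h.indep_right.insert hxB,
    h.condI.of_card_eq ?_⟩
  · exact Finset.disjoint_insert_right.mpr
      ⟨Finset.notMem_erase x A, h.disjoint.mono_left (Finset.erase_subset x A)⟩
  · rw [Finset.card_erase_of_mem hxA, Finset.card_insert_of_notMem hx]
    have := Finset.card_pos.mpr ⟨x, hxA⟩
    omega

lemma IsOptimalPair.erase_insert [DecidableEq V] (h : IsOptimalPair G A B) {x : V}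
    (hxA : x ∈ A) (hxB : ∀ t ∈ B, ¬ G.Adj x t) :
    IsOptimalPair G (A.erase x) (insert x B) :=
  ⟨h.toIsMaximumPair.erase_insert hxA hxB, h.condII.of_redSet_eq (redSet_erase_insert hxA)⟩

lemma IsOptimalPair.not_adj_of_exchange [Finite V] (h : IsOptimalPair G A B) {u z r : V}
    (hu : u ∈ redSet A B) (hiso : ∀ s ∈ redSet A B, ¬ G.Adj u s) (hzA : z ∈ A)
    (honly : ∀ t ∈ A, G.Adj u t → t = z) (hr : r ∈ redSet A B) (hru : r ≠ u) :
    ¬ G.Adj z r := by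
  classical
  intro hzr
  have hzB : z ∉ B := Finset.disjoint_left.mp h.disjoint hzA
  have hJ : IsMaximumPair G (insert u (A.erase z)) B := by
    refine ⟨?_, h.indep_left.mono (Finset.erase_subset z A) |>.insert ?_, h.indep_right,
      h.condI.of_card_eq ?_⟩
    · exact Finset.disjoint_insert_left.mpr
        ⟨hu.2, h.disjoint.mono_left (Finset.erase_subset z A)⟩
    · intro t ht hut
      exact Finset.ne_of_mem_erase ht (honly t (Finset.mem_of_mem_erase ht) hut)
    · rw [Finset.card_insert_of_notMem (fun h => hu.1 (Finset.mem_of_mem_erase h)),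
        Finset.card_erase_of_mem hzA]
      have := Finset.card_pos.mpr ⟨z, hzA⟩
      omega
  have hle := h.condII _ _ hJ.disjoint hJ.indep_left hJ.indep_right hJ.condI
  rw [numRedComp, numRedComp, redSet_insert_erase hu hzA hzB] at hle
  have hins := card_connectedComponent_induce_insert_le (G := G) (S := redSet A B \ {u})
    ⟨r, ⟨hr, hru⟩, hzr⟩
  have hdel := card_connectedComponent_induce_diff_singleton_lt hu hiso
  omega

/-- If `u` had a red neighbour `s`, moving `x` to `B` would leave `u` a fourth neighbour in
`A`, beside `x`, `s` and its neighbour in `B`. -/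
lemma IsMaximumPair.not_adj_red_of_adj_black (h : IsMaximumPair G A B) {x u s : V}
    [Fintype (G.neighborSet u)] (hdeg : G.degree u ≤ 3) (hxA : x ∈ A)
    (hxB : ∀ t ∈ B, ¬ G.Adj x t) (hxu : G.Adj x u) (hu : u ∈ redSet A B)
    (hs : s ∈ redSet A B) : ¬ G.Adj u s := by
  classical
  intro hus
  obtain ⟨a, haA, hua⟩ := (h.erase_insert hxA hxB).exists_adj_mem_left (r := u)
    (by rwa [redSet_erase_insert hxA])
  obtain ⟨hax, haA⟩ := Finset.mem_erase.mp haA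
  obtain ⟨b, hbB, hub⟩ := h.exists_adj_mem_right hu
  have hxs : x ≠ s := fun hxs => hs.1 (hxs ▸ hxA)
  have has : s ≠ a := fun has => hs.1 (has ▸ haA)
  rcases eq_or_eq_or_eq_of_adj hdeg hxu.symm hus hua hxs (Ne.symm hax) has hub with rfl | rfl | rfl
  · exact Finset.disjoint_left.mp h.disjoint hxA hbB
  · exact hs.2 hbB
  · exact Finset.disjoint_left.mp h.disjoint haA hbB

lemma IsOptimalPair.not_adj_of_adj_isolated [Finite V] [DecidableEq V] (h : IsOptimalPair G A B)
    {x u v m y : V} [Fintype (G.neighborSet u)] (hdeg : G.degree u ≤ 3) (hxA : x ∈ A)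
    (hxB : ∀ t ∈ B, ¬ G.Adj x t) (hxu : G.Adj x u) (hxv : G.Adj x v) (huv : u ≠ v)
    (hu : u ∈ redSet A B) (hv : v ∈ redSet A B) (hiso : ∀ s ∈ redSet A B, ¬ G.Adj u s)
    (hmu : G.Adj m u) (hmx : m ≠ x) (hm : m ∈ A ∨ m ∈ B) (hy : y ∈ redSet A B) (hyu : y ≠ u) :
    ¬ G.Adj y m := by
  have hAB : ∀ {a}, a ∈ A → a ∉ B := fun ha => Finset.disjoint_left.mp h.disjoint ha
  rcases hm with hmA | hmB
  · obtain ⟨b, hbB, hub⟩ := h.exists_adj_mem_right hu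
    have honly : ∀ t ∈ A.erase x, G.Adj u t → t = m := by
      intro t ht hut
      rcases eq_or_eq_or_eq_of_adj hdeg hxu.symm hmu.symm hub hmx.symm
        (fun hxb => hAB hxA (hxb ▸ hbB)) (fun hmb => hAB hmA (hmb ▸ hbB)) hut with rfl | rfl | rfl
      · exact absurd rfl (Finset.ne_of_mem_erase ht)
      · rfl
      · exact absurd hbB (hAB (Finset.mem_of_mem_erase ht))
    have hred := redSet_erase_insert (B := B) hxA
    exact fun hym => (h.erase_insert hxA hxB).not_adj_of_exchange (hred ▸ hu) (hred ▸ hiso)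
      (Finset.mem_erase.mpr ⟨hmx, hmA⟩) honly (hred ▸ hy) hyu hym.symm
  by_cases honly : ∀ t ∈ B, G.Adj u t → t = m
  · rw [redSet_comm] at hu hiso hy
    exact fun hym => h.symm.not_adj_of_exchange hu hiso hmB honly hy hyu hym.symm
  push Not at honly
  obtain ⟨b, hbB, hub, hbm⟩ := honly
  have honly' : ∀ t ∈ A, G.Adj u t → t = x := by
    intro t htA hut
    rcases eq_or_eq_or_eq_of_adj hdeg hxu.symm hmu.symm hub hmx.symm
      (fun hxb => hAB hxA (hxb ▸ hbB)) hbm.symm hut with rfl | rfl | rfl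
    · rfl
    · exact absurd hmB (hAB htA)
    · exact absurd hbB (hAB htA)
  exact absurd hxv (h.not_adj_of_exchange hu hiso hxA honly' hv huv.symm)

lemma IsOptimalPair.adj_of_edist_le_two [Finite V] [DecidableEq V] (h : IsOptimalPair G A B)
    {x u v y : V} [Fintype (G.neighborSet u)] (hdeg : G.degree u ≤ 3) (hx : x ∈ A ∪ B)
    (hxred : ∀ t, G.Adj x t → t ∈ redSet A B) (hxu : G.Adj x u) (hxv : G.Adj x v)
    (huv : u ≠ v) (hy : y ∈ redSet A B) (hyu : y ≠ u) (hdist : G.edist y u ≤ 2) :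
    G.Adj x y := by
  wlog hxA : x ∈ A generalizing A B
  · have hxB : x ∈ B := (Finset.mem_union.mp hx).resolve_left hxA
    rw [redSet_comm] at hxred hy
    exact this h.symm (Finset.mem_union_left A hxB) hxred hy hxB
  have hxB : ∀ t ∈ B, ¬ G.Adj x t := fun t htB hxt => (hxred t hxt).2 htB
  have hu := hxred u hxu
  have hiso : ∀ s ∈ redSet A B, ¬ G.Adj u s := fun s hs =>
    h.not_adj_red_of_adj_black hdeg hxA hxB hxu hu hs
  obtain ⟨m, hym, hmu⟩ :=
    exists_adj_adj_of_edist_le_two hdist hyu fun hyu' => hiso y hy hyu'.symm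
  by_contra hxy
  have hmx : m ≠ x := by
    rintro rfl
    exact hxy hym.symm
  have hm : m ∈ A ∨ m ∈ B := by
    by_contra! hm
    exact hiso m hm hmu.symm
  exact h.not_adj_of_adj_isolated hdeg hxA hxB hxu hxv huv hu (hxred v hxv) hiso hmu hmx hm hy
    hyu hym

lemma IsOptimalPair.mem_union_of_min_edist_le_two [Fintype V] [DecidableEq V]
    [DecidableRel G.Adj] (h : IsOptimalPair G A B) (hdeg : ∀ t, G.degree t ≤ 3) {x u v w y : V}
    (hx : x ∈ A ∪ B) (hxu : G.Adj x u) (hxv : G.Adj x v) (hxw : G.Adj x w) (huv : u ≠ v)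
    (huw : u ≠ w) (hvw : v ≠ w) (hu : u ∈ redSet A B) (hv : v ∈ redSet A B)
    (hw : w ∈ redSet A B) (hyu : y ≠ u) (hyv : y ≠ v) (hyw : y ≠ w)
    (hdist : min (G.edist y u) (min (G.edist y v) (G.edist y w)) ≤ 2) : y ∈ A ∪ B := by
  have hnx : ∀ t, G.Adj x t → t = u ∨ t = v ∨ t = w :=
    fun t => eq_or_eq_or_eq_of_adj (hdeg x) hxu hxv hxw huv huw hvw
  have hxred : ∀ t, G.Adj x t → t ∈ redSet A B := by
    intro t hxt
    rcases hnx t hxt with rfl | rfl | rfl <;> assumption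
  by_contra hyAB
  have hy : y ∈ redSet A B := by simpa [redSet, not_or] using hyAB
  have hxy : G.Adj x y := by
    rcases min_le_iff.mp hdist with hd | hd
    · exact h.adj_of_edist_le_two (hdeg u) hx hxred hxu hxv huv hy hyu hd
    rcases min_le_iff.mp hd with hd | hd
    · exact h.adj_of_edist_le_two (hdeg v) hx hxred hxv hxu huv.symm hy hyv hd
    · exact h.adj_of_edist_le_two (hdeg w) hx hxred hxw hxu huw.symm hy hyw hd
  rcases hnx y hxy with rfl | rfl | rfl <;> contradiction

lemma Hgraph_adj_of_adj_of_adj {x a b : V} (ha : a ∈ redSet A B) (hb : b ∈ redSet A B)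
    (hab : a ≠ b) (hxa : G.Adj x a) (hxb : G.Adj x b) : (Hgraph G A B).Adj ⟨a, ha⟩ ⟨b, hb⟩ :=
  ⟨fun h => hab (congrArg Subtype.val h), edist_le_two_of_adj_of_adj hxa hxb⟩

end Pairs

theorem triangle_component_of_common_black_neighbor_general
    {V : Type*} [Fintype V] [DecidableEq V] (G : SimpleGraph V) [DecidableRel G.Adj]
    (hcubic : ∀ v : V, G.degree v = 3)
    (I1 I2 : Finset V) (hdisj : Disjoint I1 I2)
    (hI1 : FinsetIndep G I1) (hI2 : FinsetIndep G I2)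
    (hmax : CondI G I1 I2) (hmin : CondII G I1 I2)
    (u v w x : V)
    (hu : u ∈ redSet I1 I2) (hv : v ∈ redSet I1 I2) (hw : w ∈ redSet I1 I2)
    (huvw : u ≠ v ∧ u ≠ w ∧ v ≠ w)
    (hx : x ∈ I1 ∪ I2)
    (hxu : G.Adj x u) (hxv : G.Adj x v) (hxw : G.Adj x w) :
    (∀ y : V, y ≠ u → y ≠ v → y ≠ w →
        min (G.edist y u) (min (G.edist y v) (G.edist y w)) ≤ 2 →
        y ∈ I1 ∪ I2) ∧
    (Hgraph G I1 I2).Adj ⟨u, hu⟩ ⟨v, hv⟩ ∧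
    (Hgraph G I1 I2).Adj ⟨u, hu⟩ ⟨w, hw⟩ ∧
    (Hgraph G I1 I2).Adj ⟨v, hv⟩ ⟨w, hw⟩ ∧
    ((Hgraph G I1 I2).connectedComponentMk ⟨u, hu⟩).supp =
      {(⟨u, hu⟩ : redSet I1 I2), ⟨v, hv⟩, ⟨w, hw⟩} := by
  obtain ⟨huv, huw, hvw⟩ := huvw
  have hP : IsOptimalPair G I1 I2 := ⟨⟨hdisj, hI1, hI2, hmax⟩, hmin⟩
  have hblack : ∀ y, y ≠ u → y ≠ v → y ≠ w →
      min (G.edist y u) (min (G.edist y v) (G.edist y w)) ≤ 2 → y ∈ I1 ∪ I2 :=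
    fun y => hP.mem_union_of_min_edist_le_two (fun t => (hcubic t).le) hx hxu hxv hxw
      huv huw hvw hu hv hw
  refine ⟨hblack, Hgraph_adj_of_adj_of_adj hu hv huv hxu hxv,
    Hgraph_adj_of_adj_of_adj hu hw huw hxu hxw, Hgraph_adj_of_adj_of_adj hv hw hvw hxv hxw, ?_⟩
  refine (ConnectedComponent.supp_connectedComponentMk_subset (by simp) ?_).antisymm ?_
  · rintro ⟨a, ha⟩ ⟨b, hb⟩ ⟨-, hab⟩ haS
    simp only [Set.mem_insert_iff, Set.mem_singleton_iff, Subtype.mk.injEq] at haS ⊢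
    by_contra! hbS
    have hdist : min (G.edist b u) (min (G.edist b v) (G.edist b w)) ≤ 2 := by
      rw [edist_comm] at hab
      rcases haS with rfl | rfl | rfl <;> simp [hab]
    exact (Finset.mem_union.mp (hblack b hbS.1 hbS.2.1 hbS.2.2 hdist)).elim hb.1 hb.2
  · rintro _ (rfl | rfl | rfl)
    · rfl
    · exact ConnectedComponent.connectedComponentMk_eq_of_adj
        (Hgraph_adj_of_adj_of_adj hv hu huv.symm hxv hxu)
    · exact ConnectedComponent.connectedComponentMk_eq_of_adj
        (Hgraph_adj_of_adj_of_adj hw hu huw.symm hxw hxu)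

/-- Under Conditions (I) and (II), if three red vertices `u, v, w` are adjacent
to a common black vertex `x`, then every vertex `y ∉ {u,v,w}` within distance 2
of `{u,v,w}` is black; moreover `{u,v,w}` is the vertex set of a connected
component of `H` in which `u, v, w` are pairwise adjacent. -/
theorem triangle_component_of_common_black_neighbor
    {V : Type*} [Fintype V] [DecidableEq V] (G : SimpleGraph V) [DecidableRel G.Adj]
    (hconn : G.Connected) (hcubic : ∀ v : V, G.degree v = 3)
    (I1 I2 : Finset V) (hdisj : Disjoint I1 I2)
    (hI1 : FinsetIndep G I1) (hI2 : FinsetIndep G I2)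
    (hmax : CondI G I1 I2) (hmin : CondII G I1 I2)
    (u v w x : V)
    (hu : u ∈ redSet I1 I2) (hv : v ∈ redSet I1 I2) (hw : w ∈ redSet I1 I2)
    (huvw : u ≠ v ∧ u ≠ w ∧ v ≠ w)
    (hx : x ∈ I1 ∪ I2)
    (hxu : G.Adj x u) (hxv : G.Adj x v) (hxw : G.Adj x w) :
    (∀ y : V, y ≠ u → y ≠ v → y ≠ w →
        min (G.edist y u) (min (G.edist y v) (G.edist y w)) ≤ 2 →
        y ∈ I1 ∪ I2) ∧
    (Hgraph G I1 I2).Adj ⟨u, hu⟩ ⟨v, hv⟩ ∧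
    (Hgraph G I1 I2).Adj ⟨u, hu⟩ ⟨w, hw⟩ ∧
    (Hgraph G I1 I2).Adj ⟨v, hv⟩ ⟨w, hw⟩ ∧
    ((Hgraph G I1 I2).connectedComponentMk ⟨u, hu⟩).supp =
      {(⟨u, hu⟩ : redSet I1 I2), ⟨v, hv⟩, ⟨w, hw⟩} :=
  triangle_component_of_common_black_neighbor_general G hcubic I1 I2 hdisj hI1 hI2 hmax hmin u v w x
    hu hv hw huvw hx hxu hxv hxw
end

section
/- Let G be a finite connected cubic graph containing ten distinct vertices u1, v1, u2, v2, u3, v3, u1', u2', u3', w such that u1 v1 u2 v2 u3 v3 u1 is a 6-cycle of G and G contains the edges u1u1', u2u2', u3u3', u1'v2, u2'v3, u3'v1, wu1', wu2', wu3'. Then G is isomorphic to the Petersen graph. -/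
open SimpleGraph

def petersenGraph : SimpleGraph {s : Finset (Fin 5) // s.card = 2} where
  Adj a b := Disjoint a.1 b.1
  symm := ⟨fun a b h => h.symm⟩
  loopless := by
    constructor
    intro a h
    rw [disjoint_self] at h
    have := a.2
    simp [h] at this

/-! An injective homomorphism from a graph into a graph whose degrees are no larger maps every
neighbourhood onto a whole neighbourhood, so it reflects adjacency and its image is closed under
adjacency; into a connected graph it is therefore an isomorphism. Labelling the ten configuration
vertices by 2-subsets of `Fin 5` turns the fifteen given edges into exactly the edges of the
Petersen graph, which is cubic, so the configuration is such a homomorphism into `G`. -/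

instance : DecidableRel petersenGraph.Adj :=
  fun a b => inferInstanceAs (Decidable (Disjoint a.1 b.1))

namespace SimpleGraph

variable {V W : Type*} {G : SimpleGraph V} {H : SimpleGraph W}

namespace Hom

variable [G.LocallyFinite] [H.LocallyFinite] (f : H →g G)

theorem map_neighborFinset_eq (hf : Function.Injective f) {a : W}
    (ha : G.degree (f a) ≤ H.degree a) :
    (H.neighborFinset a).map ⟨f, hf⟩ = G.neighborFinset (f a) := by
  refine Finset.eq_of_subset_of_card_le (fun b hb => ?_) ?_
  · obtain ⟨c, hc, rfl⟩ := Finset.mem_map.mp hb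
    exact (G.mem_neighborFinset _ _).mpr (f.map_adj ((H.mem_neighborFinset _ _).mp hc))
  · simpa only [Finset.card_map, card_neighborFinset_eq_degree] using ha

theorem exists_adj_of_map_adj (hf : Function.Injective f) {a : W}
    (ha : G.degree (f a) ≤ H.degree a) {b : V} (hb : G.Adj (f a) b) :
    ∃ c, H.Adj a c ∧ f c = b := by
  rw [← mem_neighborFinset, ← f.map_neighborFinset_eq hf ha] at hb
  simpa using hb

theorem map_adj_iff_of_degree_le (hf : Function.Injective f) {a : W}
    (ha : G.degree (f a) ≤ H.degree a) {c : W} :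
    G.Adj (f a) (f c) ↔ H.Adj a c := by
  refine ⟨fun h => ?_, f.map_adj⟩
  obtain ⟨d, hd, hdc⟩ := f.exists_adj_of_map_adj hf ha h
  rwa [← hf hdc]

theorem surjective_of_degree_le (hf : Function.Injective f)
    (hdeg : ∀ a, G.degree (f a) ≤ H.degree a) (hG : G.Preconnected) [Nonempty W] :
    Function.Surjective f := by
  intro b
  by_contra hb
  obtain ⟨a⟩ := ‹Nonempty W›
  obtain ⟨d, -, ⟨c, hc⟩, hd⟩ :=
    (hG (f a) b).some.exists_boundary_dart (Set.range f) ⟨a, rfl⟩ hb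
  obtain ⟨e, -, he⟩ := f.exists_adj_of_map_adj hf (hdeg c) (hc ▸ d.adj)
  exact hd ⟨e, he⟩

noncomputable def isoOfDegreeLe (hf : Function.Injective f)
    (hdeg : ∀ a, G.degree (f a) ≤ H.degree a) (hG : G.Preconnected) [Nonempty W] : H ≃g G :=
  RelIso.ofSurjective ⟨⟨f, hf⟩, f.map_adj_iff_of_degree_le hf (hdeg _)⟩
    (f.surjective_of_degree_le hf hdeg hG)

end Hom

end SimpleGraph

noncomputable def petersenLabel : Fin 10 ≃ {s : Finset (Fin 5) // s.card = 2} :=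
  Equiv.ofBijective
    ![⟨{0, 4}, rfl⟩, ⟨{1, 2}, rfl⟩, ⟨{0, 3}, rfl⟩, ⟨{1, 4}, rfl⟩, ⟨{0, 2}, rfl⟩,
      ⟨{1, 3}, rfl⟩, ⟨{2, 3}, rfl⟩, ⟨{2, 4}, rfl⟩, ⟨{3, 4}, rfl⟩, ⟨{0, 1}, rfl⟩]
    (by decide)

/-- Vertex `i` stands for entry `i` of `[u1, v1, u2, v2, u3, v3, u1', u2', u3', w]`. -/
def sixCycleConfigEdges : List (Fin 10 × Fin 10) :=
  [(0, 1), (1, 2), (2, 3), (3, 4), (4, 5), (5, 0), (0, 6), (2, 7), (4, 8),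
    (6, 3), (7, 5), (8, 1), (9, 6), (9, 7), (9, 8)]

theorem petersenGraph_degree (a : {s : Finset (Fin 5) // s.card = 2}) :
    petersenGraph.degree a = 3 := by
  revert a; decide

theorem petersenGraph_adj_petersenLabel {i j : Fin 10}
    (h : petersenGraph.Adj (petersenLabel i) (petersenLabel j)) :
    (i, j) ∈ sixCycleConfigEdges ∨ (j, i) ∈ sixCycleConfigEdges := by
  revert i j; decide

noncomputable def petersenHomOfEdges {V : Type*} {G : SimpleGraph V} (g : Fin 10 → V)
    (hg : ∀ e ∈ sixCycleConfigEdges, G.Adj (g e.1) (g e.2)) : petersenGraph →g G where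
  toFun := g ∘ petersenLabel.symm
  map_rel' {x y} h := by
    obtain ⟨i, rfl⟩ := petersenLabel.surjective x
    obtain ⟨j, rfl⟩ := petersenLabel.surjective y
    simp only [Function.comp_apply, Equiv.symm_apply_apply]
    rcases petersenGraph_adj_petersenLabel h with h | h
    exacts [hg _ h, (hg _ h).symm]

/-- A finite connected cubic graph containing the configuration of
Lemma 8 (a 6-cycle `u1 v1 u2 v2 u3 v3` with pendant vertices `u i'` joined
crosswise to the `v`'s and to a common vertex `w`) is isomorphic to the
Petersen graph. -/
theorem petersen_of_sixcycle_configuration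
    {V : Type*} [Fintype V] [DecidableEq V] (G : SimpleGraph V) [DecidableRel G.Adj]
    (hconn : G.Connected) (hcubic : ∀ a : V, G.degree a = 3)
    (u1 v1 u2 v2 u3 v3 u1' u2' u3' w : V)
    (hdistinct : ([u1, v1, u2, v2, u3, v3, u1', u2', u3', w] : List V).Pairwise (· ≠ ·))
    (c1 : G.Adj u1 v1) (c2 : G.Adj v1 u2) (c3 : G.Adj u2 v2)
    (c4 : G.Adj v2 u3) (c5 : G.Adj u3 v3) (c6 : G.Adj v3 u1)
    (p1 : G.Adj u1 u1') (p2 : G.Adj u2 u2') (p3 : G.Adj u3 u3')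
    (q1 : G.Adj u1' v2) (q2 : G.Adj u2' v3) (q3 : G.Adj u3' v1)
    (r1 : G.Adj w u1') (r2 : G.Adj w u2') (r3 : G.Adj w u3') :
    Nonempty (G ≃g petersenGraph) := by
  let g : Fin 10 → V := ([u1, v1, u2, v2, u3, v3, u1', u2', u3', w] : List V).get
  have hg : Function.Injective g := List.nodup_iff_injective_get.mp hdistinct
  have hedges : ∀ e ∈ sixCycleConfigEdges, G.Adj (g e.1) (g e.2) := by
    simp only [sixCycleConfigEdges, List.forall_mem_cons, List.not_mem_nil, IsEmpty.forall_iff,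
      implies_true, and_true]
    exact ⟨c1, c2, c3, c4, c5, c6, p1, p2, p3, q1, q2, q3, r1, r2, r3⟩
  have : Nonempty {s : Finset (Fin 5) // s.card = 2} := ⟨petersenLabel 0⟩
  exact ⟨((petersenHomOfEdges g hedges).isoOfDegreeLe (hg.comp petersenLabel.symm.injective)
    (fun a => by rw [hcubic, petersenGraph_degree]) hconn.preconnected).symm⟩
end
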